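/- arXiv:2003.08053 — 2 statements merged into one kernel-verified Lean document; each statement's English description precedes it below -/
import Mathlib

section
/- Let Γ be a commutative thick weakly distance-regular digraph. If Γ_{1,p-1} ∈ Γ_{1,q-1} Γ_{q-1,1}, then Γ_{1,p-1}^2 ⊆ Γ_{1,q-1} Γ_{q-1,1}. -/
/-!
Common framework: commutative thick weakly distance-regular digraphs.
-/

variable {V : Type*}

/-- There is a directed walk of length `n` from `x` to `y`. -/
def HasWalk (adj : V → V → Prop) (x y : V) (n : ℕ) : Prop :=
  ∃ f : ℕ → V, f 0 = x ∧ f n = y ∧ ∀ i < n, adj (f i) (f (i + 1))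

/-- Directed distance `∂(x,y)`. -/
noncomputable def ddist (adj : V → V → Prop) (x y : V) : ℕ :=
  sInf {n | HasWalk adj x y n}

/-- Two-way distance `∂̃(x,y) = (∂(x,y), ∂(y,x))`. -/
noncomputable def tdist (adj : V → V → Prop) (x y : V) : ℕ × ℕ :=
  (ddist adj x y, ddist adj y x)

/-- The pair `i` is an attained two-way distance, i.e. `i ∈ ∂̃(Γ)`. -/
def Attained (adj : V → V → Prop) (i : ℕ × ℕ) : Prop :=
  ∃ x y : V, tdist adj x y = i

/-- Intersection number `p^h_{i,j}`: for attained `h` it is the common cardinality of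
`{z | ∂̃(x,z) = i, ∂̃(z,y) = j}` over pairs with `∂̃(x,y) = h` (and `0` otherwise). -/
noncomputable def pnum (adj : V → V → Prop) (h i j : ℕ × ℕ) : ℕ :=
  sSup {n | ∃ x y : V, tdist adj x y = h ∧
    n = Set.ncard {z : V | tdist adj x z = i ∧ tdist adj z y = j}}

/-- Valency `k_i = |Γ_i(x)|`. -/
noncomputable def kval (adj : V → V → Prop) (i : ℕ × ℕ) : ℕ :=
  pnum adj (0, 0) i i.swap

/-- Adjacency of the subdigraph `Δ_J`: arcs of type `(1, t-1)` for `t ∈ J`. -/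
def deltaAdj (adj : V → V → Prop) (J : Set ℕ) (u v : V) : Prop :=
  ∃ t ∈ J, tdist adj u v = (1, t - 1)

/-- A circuit of length `s`. -/
def IsCircuit (adj : V → V → Prop) (s : ℕ) (f : ℕ → V) : Prop :=
  0 < s ∧ f s = f 0 ∧ ∀ i < s, adj (f i) (f (i + 1))

/-- Strongly connected. -/
def IsStrong (adj : V → V → Prop) : Prop :=
  ∀ x y : V, ∃ n, HasWalk adj x y n

/-- Weakly distance-regular: the intersection numbers are well defined. -/
def IsWDR (adj : V → V → Prop) : Prop :=
  ∀ (i j : ℕ × ℕ) (x y x' y' : V), tdist adj x y = tdist adj x' y' →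
    Set.ncard {z : V | tdist adj x z = i ∧ tdist adj z y = j}
      = Set.ncard {z : V | tdist adj x' z = i ∧ tdist adj z y' = j}

/-- Thick: `p^h_{i,i}, p^h_{i,i*} ∈ {0, k_i}`. -/
def IsThick (adj : V → V → Prop) : Prop :=
  ∀ h i : ℕ × ℕ,
    (pnum adj h i i = 0 ∨ pnum adj h i i = kval adj i) ∧
    (pnum adj h i i.swap = 0 ∨ pnum adj h i i.swap = kval adj i)

/-- A thick weakly distance-regular digraph (as a property of an adjacency relation). -/
def IsWDRThick (adj : V → V → Prop) : Prop :=
  IsStrong adj ∧ IsWDR adj ∧ IsThick adj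

/-- A commutative thick weakly distance-regular digraph. -/
structure CTWDR (V : Type*) [Fintype V] where
  adj : V → V → Prop
  loopless : ∀ v, ¬ adj v v
  strong : IsStrong adj
  wdr : IsWDR adj
  comm : ∀ (i j : ℕ × ℕ) (x y : V),
    Set.ncard {z : V | tdist adj x z = i ∧ tdist adj z y = j}
      = Set.ncard {z : V | tdist adj x z = j ∧ tdist adj z y = i}
  thick : IsThick adj

namespace CTWDR

variable {V : Type*} [Fintype V] (G : CTWDR V)

/-- Product `EF` of two sets of relations (relations identified with two-way distances). -/
def prodS (E F : Set (ℕ × ℕ)) : Set (ℕ × ℕ) :=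
  {h | ∃ i ∈ E, ∃ j ∈ F, pnum G.adj h i j ≠ 0}

/-- Powers `Γ_i^l` (with `Γ_i^0 = {Γ_{(0,0)}}` and `Γ_i^1 = {Γ_i}`). -/
def pow (i : ℕ × ℕ) : ℕ → Set (ℕ × ℕ)
  | 0 => {(0, 0)}
  | 1 => {i}
  | n + 2 => G.prodS (pow i (n + 1)) {i}

/-- The pair `(1, s-1)` is pure: every circuit of length `s` containing an arc of type
`(1, s-1)` consists of arcs of type `(1, s-1)`. -/
def Pure (s : ℕ) : Prop :=
  ∀ f : ℕ → V, IsCircuit G.adj s f →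
    (∃ i < s, tdist G.adj (f i) (f (i + 1)) = (1, s - 1)) →
    ∀ i < s, tdist G.adj (f i) (f (i + 1)) = (1, s - 1)

/-- `(1, s-1)` is mixed. -/
def Mixed (s : ℕ) : Prop := ¬ G.Pure s

/-- Configuration `C(q)` exists. -/
def Cexists (q : ℕ) : Prop :=
  pnum G.adj (1, q - 2) (1, q - 1) (1, q - 1) ≠ 0 ∧ G.Pure (q - 1)

/-- Configuration `D(q)` exists. -/
def Dexists (q : ℕ) : Prop :=
  pnum G.adj (1, q - 1) (1, q - 2) (q - 2, 1) ≠ 0 ∧ G.Pure (q - 1)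

/-- A closed set of relations: `Γ_{i*}Γ_j ⊆ F` for all `i, j ∈ F`. -/
def Closed (F : Set (ℕ × ℕ)) : Prop :=
  ∀ i ∈ F, ∀ j ∈ F, G.prodS {i.swap} {j} ⊆ F

/-- The minimal closed set `⟨F⟩` containing `F`. -/
def genClosed (F : Set (ℕ × ℕ)) : Set (ℕ × ℕ) :=
  ⋂₀ {C | F ⊆ C ∧ G.Closed C}

/-- The block `F_J(x)` of the closed set generated by `{Γ_{1,t-1}}_{t ∈ J}`. -/
def block (J : Set ℕ) (x : V) : Set V :=
  {y | tdist G.adj x y ∈ G.genClosed {i | ∃ t ∈ J, i = (1, t - 1)}}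

end CTWDR

/-!
Thickness forces `p^{(1,p-1)}_{(1,q-1),(q-1,1)} = k_{1,q-1}` as soon as it is nonzero: then for every
arc `x → w` of type `(1,p-1)`, *every* `z` with `∂̃(x,z) = (1,q-1)` satisfies `∂̃(z,w) = (q-1,1)`.
Given a path `x → w → y` of two arcs of type `(1,p-1)`, pick such a `z`; the fullness applied to
`(x,w)` gives `∂̃(w,z) = (1,q-1)`, and applied again to `(w,y)` it gives `∂̃(z,y) = (q-1,1)`,
so `z` witnesses `∂̃(x,y) ∈ Γ_{1,q-1}Γ_{q-1,1}`.
-/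

section IntersectionNumbers

variable {adj : V → V → Prop}

lemma tdist_self (x : V) : tdist adj x x = (0, 0) := by
  have hwalk : HasWalk adj x x 0 := ⟨fun _ => x, rfl, rfl, fun _ hi => absurd hi (Nat.not_lt_zero _)⟩
  have hzero : ddist adj x x = 0 := Nat.sInf_eq_zero.2 (Or.inl hwalk)
  simp [tdist, hzero]

lemma pnum_eq_ncard (wdr : IsWDR adj) {h : ℕ × ℕ} {x y : V} (hxy : tdist adj x y = h)
    (i j : ℕ × ℕ) :
    pnum adj h i j = {z | tdist adj x z = i ∧ tdist adj z y = j}.ncard := by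
  have hvalues : {n | ∃ x' y' : V, tdist adj x' y' = h ∧
      n = {z | tdist adj x' z = i ∧ tdist adj z y' = j}.ncard}
      = {{z | tdist adj x z = i ∧ tdist adj z y = j}.ncard} := by
    ext n
    constructor
    · rintro ⟨x', y', hxy', rfl⟩
      exact wdr i j x' y' x y (hxy'.trans hxy.symm)
    · rintro rfl
      exact ⟨x, y, hxy, rfl⟩
  rw [pnum, hvalues, csSup_singleton]

lemma kval_eq_ncard (wdr : IsWDR adj) (i : ℕ × ℕ) (x : V) :
    kval adj i = {z | tdist adj x z = i}.ncard := by
  rw [kval, pnum_eq_ncard wdr (tdist_self x) i i.swap]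
  congr 1
  exact Set.ext fun z => and_iff_left_of_imp fun hxz => congrArg Prod.swap hxz

lemma exists_of_pnum_ne_zero {h i j : ℕ × ℕ} (hne : pnum adj h i j ≠ 0) :
    ∃ x y : V, tdist adj x y = h ∧ ∃ z, tdist adj x z = i ∧ tdist adj z y = j := by
  by_contra! hempty
  apply hne
  have hvalues : {n | ∃ x y : V, tdist adj x y = h ∧
      n = {z | tdist adj x z = i ∧ tdist adj z y = j}.ncard} ⊆ {0} := by
    rintro n ⟨x, y, hxy, rfl⟩
    have hnone : {z | tdist adj x z = i ∧ tdist adj z y = j} = ∅ :=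
      Set.eq_empty_of_forall_notMem fun z hz => hempty x y hxy z hz.1 hz.2
    rw [Set.mem_singleton_iff, hnone, Set.ncard_empty]
  rcases Set.subset_singleton_iff_eq.1 hvalues with hvalues | hvalues <;>
    simp [pnum, hvalues]

variable [Finite V]

lemma pnum_ne_zero_of_tdist (wdr : IsWDR adj) {i j : ℕ × ℕ} {x y z : V} (hxz : tdist adj x z = i)
    (hzy : tdist adj z y = j) : pnum adj (tdist adj x y) i j ≠ 0 := by
  rw [pnum_eq_ncard wdr rfl]
  exact Set.ncard_ne_zero_of_mem (a := z) ⟨hxz, hzy⟩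

lemma exists_tdist_eq_of_attained (wdr : IsWDR adj) {i : ℕ × ℕ} (hi : Attained adj i) (x : V) :
    ∃ z, tdist adj x z = i := by
  obtain ⟨x₀, y₀, hy₀⟩ := hi
  have hcard : {z | tdist adj x z = i}.ncard ≠ 0 := by
    rw [← kval_eq_ncard wdr i x, kval_eq_ncard wdr i x₀]
    exact Set.ncard_ne_zero_of_mem (a := y₀) hy₀
  exact Set.nonempty_of_ncard_ne_zero hcard

/-- Thickness turns `p^h_{i,i*} ≠ 0` into `p^h_{i,i*} = k_i`, so the set counted by `p^h_{i,i*}`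
is all of `Γ_i(x)`. -/
lemma tdist_eq_swap_of_thick (wdr : IsWDR adj) (thick : IsThick adj) {h i : ℕ × ℕ}
    (hne : pnum adj h i i.swap ≠ 0) {x w z : V} (hxw : tdist adj x w = h)
    (hxz : tdist adj x z = i) : tdist adj z w = i.swap := by
  have hcard : {z | tdist adj x z = i}.ncard
      ≤ {z | tdist adj x z = i ∧ tdist adj z w = i.swap}.ncard := by
    rw [← pnum_eq_ncard wdr hxw, (thick h i).2.resolve_left hne, kval_eq_ncard wdr i x]
  have hfull := Set.eq_of_subset_of_ncard_le (fun _ hz => hz.1) hcard (Set.toFinite _)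
  exact (hfull ▸ hxz : z ∈ {z | tdist adj x z = i ∧ tdist adj z w = i.swap}).2

end IntersectionNumbers

theorem stmt1_general {V : Type*} [Fintype V] (G : CTWDR V) (p q : ℕ)
    (hq : Attained G.adj (1, q - 1))
    (h : (1, p - 1) ∈ G.prodS {(1, q - 1)} {(q - 1, 1)}) :
    G.pow (1, p - 1) 2 ⊆ G.prodS {(1, q - 1)} {(q - 1, 1)} := by
  obtain ⟨_, rfl, _, rfl, hne⟩ := h
  rintro _ ⟨_, rfl, _, rfl, hpath⟩
  obtain ⟨x, y, rfl, w, hxw, hwy⟩ := exists_of_pnum_ne_zero hpath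
  obtain ⟨z, hxz⟩ := exists_tdist_eq_of_attained G.wdr hq x
  have hzw : tdist G.adj z w = (q - 1, 1) :=
    tdist_eq_swap_of_thick G.wdr G.thick (i := (1, q - 1)) hne hxw hxz
  have hzy : tdist G.adj z y = (q - 1, 1) :=
    tdist_eq_swap_of_thick G.wdr G.thick (i := (1, q - 1)) hne hwy (congrArg Prod.swap hzw)
  exact ⟨_, rfl, _, rfl, pnum_ne_zero_of_tdist G.wdr hxz hzy⟩

/-- Lemma 2.2: if `Γ_{1,p-1} ∈ Γ_{1,q-1}Γ_{q-1,1}`, then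
`Γ_{1,p-1}^2 ⊆ Γ_{1,q-1}Γ_{q-1,1}`. -/
theorem stmt1 {V : Type*} [Fintype V] (G : CTWDR V) (p q : ℕ)
    (hp : Attained G.adj (1, p - 1)) (hq : Attained G.adj (1, q - 1))
    (h : (1, p - 1) ∈ G.prodS {(1, q - 1)} {(q - 1, 1)}) :
    G.pow (1, p - 1) 2 ⊆ G.prodS {(1, q - 1)} {(q - 1, 1)} :=
  stmt1_general G p q hq h
end

section
/- Let Γ be a commutative thick weakly distance-regular digraph with p^{(2,q-2)}_{(1,q-1),(1,q-1)} = m > 0. Then for every l with 1 ≤ l ≤ q-1, the product Γ_{1,q-1}^l equals the singleton {Γ_{l,q-l}}; in particular any path of length l consisting of arcs of type (1,q-1) joins vertices at two-way distance (l, q-l). -/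
/-!
Common framework: commutative thick weakly distance-regular digraphs.
-/

variable {V : Type*}

/-!
Write `i = (1, q - 1)`. Thickness upgrades `p^{(2,q-2)}_{i,i} ≠ 0` to `p^{(2,q-2)}_{i,i} = k_i`:
whenever `∂̃(x, y) = (2, q - 2)`, every `i`-out-neighbour of `x` is an `i`-in-neighbour of `y`.
Transporting a configuration `x → z → y` onto an arbitrary `i`-arc and closing it up along a
shortest walk gives a closed walk of length `q`, and the same fact, applied to the chords
`(2, q - 2)` of that walk, shows that all its arcs have type `i`. Along an `i`-path `u` starting
with the arc `u₀ → u₁` of such a circuit `d`, the vertices `uⱼ` and `dⱼ` have the same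
`i`-out-neighbours, so `u_L → d_{L+1}`; the walks around the resulting circuit, together with the
back-distance `q - 1` of the arcs at `u_L`, pin down `∂̃(u₀, u_L) = (L, q - L)`. Finally, every
pair at two-way distance `(L, q - L)` is joined by an `i`-path, whence `Γ_i^L = {Γ_{L,q-L}}`.
-/

section Walks

variable {V : Type*} {adj : V → V → Prop}

lemma ddist_le_of_hasWalk {x y : V} {n : ℕ} (h : HasWalk adj x y n) : ddist adj x y ≤ n :=
  Nat.sInf_le h

lemma ddist_le_of_chain {c : ℕ → V} {n : ℕ} (h : ∀ j < n, adj (c j) (c (j + 1))) :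
    ddist adj (c 0) (c n) ≤ n :=
  ddist_le_of_hasWalk ⟨c, rfl, rfl, h⟩

lemma ddist_le_of_forall_adj {c : ℕ → V} (h : ∀ j, adj (c j) (c (j + 1))) (a n : ℕ) :
    ddist adj (c a) (c (a + n)) ≤ n :=
  ddist_le_of_chain (c := fun t => c (a + t)) fun j _ => h (a + j)

lemma hasWalk_ddist (hs : IsStrong adj) (x y : V) : HasWalk adj x y (ddist adj x y) :=
  Nat.sInf_mem (hs x y)

lemma ddist_self (x : V) : ddist adj x x = 0 :=
  Nat.le_zero.mp (ddist_le_of_chain (c := fun _ => x) (n := 0) nofun)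

lemma eq_of_ddist_eq_zero (hs : IsStrong adj) {x y : V} (h : ddist adj x y = 0) : x = y := by
  obtain ⟨f, hx, hy, -⟩ := h ▸ hasWalk_ddist hs x y
  exact hx.symm.trans hy

lemma adj_of_tdist_eq (hs : IsStrong adj) {x y : V} {k : ℕ} (h : tdist adj x y = (1, k)) :
    adj x y := by
  have hw := hasWalk_ddist hs x y
  rw [show ddist adj x y = 1 from congrArg Prod.fst h] at hw
  obtain ⟨f, rfl, rfl, hf⟩ := hw
  exact hf 0 one_pos

lemma HasWalk.append {x y z : V} {m n : ℕ} (h₁ : HasWalk adj x y m) (h₂ : HasWalk adj y z n) :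
    HasWalk adj x z (m + n) := by
  obtain ⟨f, rfl, hfm, hf⟩ := h₁
  obtain ⟨g, rfl, rfl, hg⟩ := h₂
  refine ⟨fun t => if t ≤ m then f t else g (t - m), by simp, ?_, fun t ht => ?_⟩
  · rcases Nat.eq_zero_or_pos n with rfl | hn
    · simp [hfm]
    · simp [show ¬ m + n ≤ m by omega]
  · rcases Nat.lt_trichotomy t m with htm | rfl | htm
    · simpa [htm.le, show t + 1 ≤ m by omega] using hf t htm
    · simpa [hfm] using hg 0 (by omega)
    · simpa [show ¬ t ≤ m by omega, show ¬ t + 1 ≤ m by omega,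
        show t + 1 - m = t - m + 1 by omega] using hg (t - m) (by omega)

lemma tdist_swap (x y : V) : tdist adj y x = (tdist adj x y).swap := rfl

lemma ddist_triangle (hs : IsStrong adj) (x y z : V) :
    ddist adj x z ≤ ddist adj x y + ddist adj y z :=
  ddist_le_of_hasWalk ((hasWalk_ddist hs x y).append (hasWalk_ddist hs y z))

/-- If both arcs `y₀ → y → y₁` at `y` have back-distance `q - 1`, the triangle inequality turns
the four upper bounds coming from a circuit of length `q` through `x` and `y` into equalities. -/
lemma tdist_eq_of_circuit_bounds (hs : IsStrong adj) {x y y₀ y₁ : V} {n q : ℕ}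
    (hn : 1 ≤ n) (hnq : n < q) (hin : ddist adj y y₀ = q - 1) (hout : ddist adj y₁ y = q - 1)
    (hxy₀ : ddist adj x y₀ ≤ n - 1) (hxy : ddist adj x y ≤ n)
    (hy₁x : ddist adj y₁ x ≤ q - n - 1) (hyx : ddist adj y x ≤ q - n) :
    tdist adj x y = (n, q - n) := by
  have := ddist_triangle hs y x y₀
  have := ddist_triangle hs y₁ x y
  simp only [tdist, Prod.mk.injEq]
  omega

lemma adj_mod_of_isCircuit {q : ℕ} {c : ℕ → V} (hc : IsCircuit adj q c) (j : ℕ) :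
    adj (c (j % q)) (c ((j + 1) % q)) := by
  obtain ⟨hq, hcq, hc⟩ := hc
  have hj := Nat.mod_lt j hq
  rcases Nat.lt_or_ge (j % q + 1) q with hlt | hge
  · rw [← Nat.mod_add_mod, Nat.mod_eq_of_lt hlt]
    exact hc _ hj
  · have hq' : j % q + 1 = q := by omega
    rw [← Nat.mod_add_mod, hq', Nat.mod_self, ← hcq]
    simpa only [hq'] using hc _ hj

lemma exists_periodic_of_hasWalk {x y z : V} {q : ℕ} (hq : 2 < q) (hxy : adj x y)
    (hyz : adj y z) (hzx : HasWalk adj z x (q - 2)) :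
    ∃ d : ℕ → V, d 0 = x ∧ d 1 = y ∧ d 2 = z ∧ (∀ j, d (j + q) = d j) ∧
      ∀ j, adj (d j) (d (j + 1)) := by
  obtain ⟨f, rfl, hfq, hf⟩ := hzx
  let c : ℕ → V
    | 0 => x
    | 1 => y
    | n + 2 => f n
  have hc : IsCircuit adj q c := by
    refine ⟨by omega, ?_, fun j hj => ?_⟩
    · obtain ⟨n, rfl⟩ : ∃ n, q = n + 2 := ⟨q - 2, by omega⟩
      exact hfq
    · match j with
      | 0 => exact hxy
      | 1 => exact hyz
      | n + 2 => exact hf n (by omega)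
  refine ⟨fun j => c (j % q), ?_, ?_, ?_, fun j => by simp only [Nat.add_mod_right],
    adj_mod_of_isCircuit hc⟩ <;>
    simp [c, Nat.mod_eq_of_lt (show 1 < q by omega), Nat.mod_eq_of_lt hq]

end Walks

lemma forall_lt_succ_update {α : Type*} (R : α → α → Prop) {u : ℕ → α} {n : ℕ} {a : α}
    (hu : ∀ j < n, R (u j) (u (j + 1))) (ha : R (u n) a) :
    ∀ j < n + 1, R (Function.update u (n + 1) a j) (Function.update u (n + 1) a (j + 1)) := by
  intro j hj
  rw [Function.update_of_ne (by omega)]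
  rcases Nat.lt_succ_iff_lt_or_eq.mp hj with hj | rfl
  · rw [Function.update_of_ne (by omega)]
    exact hu j hj
  · rw [Function.update_self]
    exact ha

namespace CTWDR

variable {V : Type*} [Fintype V] (G : CTWDR V)

lemma pnum_tdist (x y : V) (i j : ℕ × ℕ) :
    pnum G.adj (tdist G.adj x y) i j
      = {z | tdist G.adj x z = i ∧ tdist G.adj z y = j}.ncard := by
  have hset : {n | ∃ x' y', tdist G.adj x' y' = tdist G.adj x y ∧
      n = {z | tdist G.adj x' z = i ∧ tdist G.adj z y' = j}.ncard}
      = {{z | tdist G.adj x z = i ∧ tdist G.adj z y = j}.ncard} := by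
    ext n
    constructor
    · rintro ⟨x', y', he, rfl⟩
      exact G.wdr i j x' y' x y he
    · rintro rfl
      exact ⟨x, y, rfl, rfl⟩
  rw [pnum, hset, csSup_singleton]

lemma pnum_tdist_ne_zero {x y z : V} {i j : ℕ × ℕ} (hxz : tdist G.adj x z = i)
    (hzy : tdist G.adj z y = j) : pnum G.adj (tdist G.adj x y) i j ≠ 0 := by
  rw [pnum_tdist]
  exact ((Set.ncard_pos (Set.toFinite _)).mpr ⟨z, show _ ∧ _ from ⟨hxz, hzy⟩⟩).ne'

lemma exists_of_pnum_ne_zero {k i j : ℕ × ℕ} (h : pnum G.adj k i j ≠ 0) :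
    ∃ x y z : V, tdist G.adj x y = k ∧ tdist G.adj x z = i ∧ tdist G.adj z y = j := by
  obtain ⟨x, y, rfl⟩ : ∃ x y : V, tdist G.adj x y = k := by
    by_contra hk
    simp only [not_exists] at hk
    simp [pnum, hk] at h
  obtain ⟨z, hz⟩ := Set.nonempty_of_ncard_ne_zero (G.pnum_tdist x y i j ▸ h)
  exact ⟨x, y, z, rfl, hz⟩

lemma ncard_tdist_eq_kval (x : V) (i : ℕ × ℕ) :
    {z | tdist G.adj x z = i}.ncard = kval G.adj i := by
  have hx : tdist G.adj x x = (0, 0) := by simp [tdist, ddist_self]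
  rw [kval, ← hx, pnum_tdist]
  congr 1
  ext z
  exact ⟨fun hz => ⟨hz, by rw [← hz]; rfl⟩, And.left⟩

/-- Thickness: a nonzero `p^h_{i,i}` equals `k_i`, so the `z` counted by it are all of `Γ_i(x)`. -/
lemma tdist_eq_of_pnum_ne_zero {x y z : V} {i : ℕ × ℕ}
    (hp : pnum G.adj (tdist G.adj x y) i i ≠ 0) (hxz : tdist G.adj x z = i) :
    tdist G.adj z y = i := by
  have hk := (G.thick (tdist G.adj x y) i).1.resolve_left hp
  have hfull : {w | tdist G.adj x w = i ∧ tdist G.adj w y = i} = {w | tdist G.adj x w = i} :=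
    Set.eq_of_subset_of_ncard_le (fun _ hw => hw.1)
      (by rw [ncard_tdist_eq_kval, ← hk, pnum_tdist]) (Set.toFinite _)
  exact (hfull ▸ hxz : z ∈ {w | tdist G.adj x w = i ∧ tdist G.adj w y = i}).2

variable {G} {q : ℕ}

lemma three_le_of_pnum_ne_zero (h : pnum G.adj (2, q - 2) (1, q - 1) (1, q - 1) ≠ 0) : 3 ≤ q := by
  obtain ⟨x, y, -, hxy, -, -⟩ := G.exists_of_pnum_ne_zero h
  have hxy₁ : ddist G.adj x y = 2 := congrArg Prod.fst hxy
  have hyx : ddist G.adj y x = q - 2 := congrArg Prod.snd hxy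
  by_contra hq
  rw [eq_of_ddist_eq_zero G.strong (show ddist G.adj y x = 0 by omega), ddist_self] at hxy₁
  omega

lemma exists_arc_seq (h : pnum G.adj (2, q - 2) (1, q - 1) (1, q - 1) ≠ 0) (v : V) :
    ∃ p : ℕ → V, p 0 = v ∧ ∀ j, tdist G.adj (p j) (p (j + 1)) = (1, q - 1) := by
  have hsucc : ∀ w : V, ∃ w', tdist G.adj w w' = (1, q - 1) := by
    obtain ⟨x, -, z, -, hxz, -⟩ := G.exists_of_pnum_ne_zero h
    intro w
    have hne : {w' | tdist G.adj w w' = (1, q - 1)}.ncard ≠ 0 := by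
      rw [ncard_tdist_eq_kval, ← G.ncard_tdist_eq_kval x]
      exact ((Set.ncard_pos (Set.toFinite _)).mpr ⟨z, hxz⟩).ne'
    exact Set.nonempty_of_ncard_ne_zero hne
  choose F hF using hsucc
  exact ⟨fun t => F^[t] v, rfl, fun j => by
    simpa only [Function.iterate_succ_apply'] using hF (F^[j] v)⟩

/-- The chord `d (j + 1) → d (j + 3)` has type `(2, q - 2)`, so thickness moves the arc forward. -/
lemma tdist_add_two_of_periodic (h : pnum G.adj (2, q - 2) (1, q - 1) (1, q - 1) ≠ 0)
    {d : ℕ → V} (hper : ∀ j, d (j + q) = d j) (hadj : ∀ j, G.adj (d j) (d (j + 1))) {j : ℕ}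
    (h₀ : tdist G.adj (d j) (d (j + 1)) = (1, q - 1))
    (h₁ : tdist G.adj (d (j + 1)) (d (j + 2)) = (1, q - 1)) :
    tdist G.adj (d (j + 2)) (d (j + 3)) = (1, q - 1) := by
  have hq := three_le_of_pnum_ne_zero h
  have h₁₃ : ddist G.adj (d (j + 1)) (d (j + 3)) ≤ 2 := ddist_le_of_forall_adj hadj (j + 1) 2
  have h₂₃ : ddist G.adj (d (j + 2)) (d (j + 3)) ≤ 1 := ddist_le_of_forall_adj hadj (j + 2) 1
  have h₃₀ : ddist G.adj (d (j + 3)) (d j) ≤ q - 3 := by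
    have := ddist_le_of_forall_adj hadj (j + 3) (q - 3)
    rwa [show j + 3 + (q - 3) = j + q by omega, hper] at this
  have h₃₁ : ddist G.adj (d (j + 3)) (d (j + 1)) ≤ q - 2 := by
    have := ddist_le_of_forall_adj hadj (j + 3) (q - 2)
    rwa [show j + 3 + (q - 2) = j + 1 + q by omega, hper] at this
  have hchord : tdist G.adj (d (j + 3)) (d (j + 1)) = (q - 2, q - (q - 2)) :=
    tdist_eq_of_circuit_bounds G.strong (by omega) (by omega) (congrArg Prod.snd h₀)
      (congrArg Prod.snd h₁) (by omega) h₃₁ (by omega) (by omega)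
  have hchord' : tdist G.adj (d (j + 1)) (d (j + 3)) = (2, q - 2) := by
    rw [tdist_swap, hchord, show q - (q - 2) = 2 by omega]
    rfl
  exact G.tdist_eq_of_pnum_ne_zero (hchord' ▸ h) h₁

lemma exists_periodic_arc_seq (h : pnum G.adj (2, q - 2) (1, q - 1) (1, q - 1) ≠ 0)
    {a₀ a₁ : V} (ha : tdist G.adj a₀ a₁ = (1, q - 1)) :
    ∃ d : ℕ → V, d 0 = a₀ ∧ d 1 = a₁ ∧ (∀ j, d (j + q) = d j) ∧
      ∀ j, tdist G.adj (d j) (d (j + 1)) = (1, q - 1) := by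
  obtain ⟨x, y, z, hxy, hxz, hzy⟩ := G.exists_of_pnum_ne_zero h
  obtain ⟨v, ha₀v, hva₁⟩ :
      ∃ v, tdist G.adj a₀ v = (2, q - 2) ∧ tdist G.adj v a₁ = (q - 1, 1) := by
    have hp := G.pnum_tdist_ne_zero hxy
      (show tdist G.adj y z = (q - 1, 1) by rw [tdist_swap, hzy]; rfl)
    rw [hxz, ← ha, pnum_tdist] at hp
    exact Set.nonempty_of_ncard_ne_zero hp
  have ha₁v : tdist G.adj a₁ v = (1, q - 1) := by rw [tdist_swap, hva₁]; rfl
  have hwalk := hasWalk_ddist G.strong v a₀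
  rw [show ddist G.adj v a₀ = q - 2 from congrArg Prod.snd ha₀v] at hwalk
  obtain ⟨d, hd0, hd1, hd2, hper, hadj⟩ := exists_periodic_of_hasWalk
    (by have := three_le_of_pnum_ne_zero h; omega)
    (adj_of_tdist_eq G.strong ha) (adj_of_tdist_eq G.strong ha₁v) hwalk
  have hpair : ∀ j, tdist G.adj (d j) (d (j + 1)) = (1, q - 1) ∧
      tdist G.adj (d (j + 1)) (d (j + 2)) = (1, q - 1) := by
    intro j
    induction j with
    | zero => exact ⟨hd0 ▸ hd1 ▸ ha, hd1 ▸ hd2 ▸ ha₁v⟩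
    | succ j ih => exact ⟨ih.2, tdist_add_two_of_periodic h hper hadj ih.1 ih.2⟩
  exact ⟨d, hd0, hd1, hper, fun j => (hpair j).1⟩

theorem tdist_eq_of_arc_path (h : pnum G.adj (2, q - 2) (1, q - 1) (1, q - 1) ≠ 0) {L : ℕ}
    (hL : 1 ≤ L) (hLq : L ≤ q - 1) {u : ℕ → V}
    (hu : ∀ j < L, tdist G.adj (u j) (u (j + 1)) = (1, q - 1)) :
    tdist G.adj (u 0) (u L) = (L, q - L) := by
  obtain ⟨d, hd0, hd1, hper, hd⟩ := exists_periodic_arc_seq h (hu 0 hL)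
  have hnbr : ∀ j, 1 ≤ j → j ≤ L → ∀ z,
      tdist G.adj (d j) z = (1, q - 1) → tdist G.adj (u j) z = (1, q - 1) := by
    intro j hj
    induction j, hj using Nat.le_induction with
    | base => exact fun _ z hz => hd1 ▸ hz
    | succ j hj ih =>
      intro hjL z hz
      have hud : tdist G.adj (u j) (d (j + 1)) = (1, q - 1) := ih (by omega) _ (hd j)
      exact G.tdist_eq_of_pnum_ne_zero (G.pnum_tdist_ne_zero hud hz) (hu j (by omega))
  have hLd : tdist G.adj (u L) (d (L + 1)) = (1, q - 1) := hnbr L hL le_rfl _ (hd L)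
  have hin : tdist G.adj (u (L - 1)) (u L) = (1, q - 1) := by
    simpa [Nat.sub_add_cancel hL] using hu (L - 1) (by omega)
  have hdadj : ∀ j, G.adj (d j) (d (j + 1)) := fun j => adj_of_tdist_eq G.strong (hd j)
  have huadj : ∀ j < L, G.adj (u j) (u (j + 1)) := fun j hj => adj_of_tdist_eq G.strong (hu j hj)
  have hdu : ddist G.adj (d (L + 1)) (u 0) ≤ q - L - 1 := by
    have hback : d (L + 1 + (q - L - 1)) = u 0 := by
      rw [show L + 1 + (q - L - 1) = 0 + q by omega, hper, hd0]
    exact hback ▸ ddist_le_of_forall_adj hdadj (L + 1) (q - L - 1)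
  have huu : ddist G.adj (u 0) (u (L - 1)) ≤ L - 1 :=
    ddist_le_of_chain fun j hj => huadj j (by omega)
  have hLu : ddist G.adj (u L) (u 0) ≤ q - L := by
    have h₁ : ddist G.adj (u L) (d (L + 1)) = 1 := congrArg Prod.fst hLd
    have := ddist_triangle G.strong (u L) (d (L + 1)) (u 0)
    omega
  exact tdist_eq_of_circuit_bounds G.strong hL (by omega) (congrArg Prod.snd hin)
    (congrArg Prod.snd hLd) huu (ddist_le_of_chain huadj) hdu hLu

lemma pnum_succ_ne_zero (h : pnum G.adj (2, q - 2) (1, q - 1) (1, q - 1) ≠ 0) {L : ℕ}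
    (hL : 1 ≤ L) (hLq : L + 1 ≤ q - 1) :
    pnum G.adj (L + 1, q - (L + 1)) (L, q - L) (1, q - 1) ≠ 0 := by
  obtain ⟨x, -⟩ := G.exists_of_pnum_ne_zero h
  obtain ⟨p, -, hp⟩ := exists_arc_seq h x
  rw [← tdist_eq_of_arc_path h (by omega) hLq fun j _ => hp j]
  exact G.pnum_tdist_ne_zero (tdist_eq_of_arc_path h hL (by omega) fun j _ => hp j) (hp L)

lemma exists_arc_path_of_tdist (h : pnum G.adj (2, q - 2) (1, q - 1) (1, q - 1) ≠ 0) {L : ℕ}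
    (hL : 1 ≤ L) (hLq : L ≤ q - 1) {x z : V} (hxz : tdist G.adj x z = (L, q - L)) :
    ∃ u : ℕ → V, u 0 = x ∧ u L = z ∧ ∀ j < L, tdist G.adj (u j) (u (j + 1)) = (1, q - 1) := by
  induction L, hL using Nat.le_induction generalizing z with
  | base =>
    exact ⟨Function.update (fun _ => x) 1 z, rfl, Function.update_self .., forall_lt_succ_update
      (fun a b => tdist G.adj a b = (1, q - 1)) (fun _ hj => absurd hj (Nat.not_lt_zero _)) hxz⟩
  | succ L hL ih =>
    have hp := pnum_succ_ne_zero h hL hLq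
    rw [← hxz, pnum_tdist] at hp
    obtain ⟨z₁, hxz₁, hz₁z⟩ := Set.nonempty_of_ncard_ne_zero hp
    obtain ⟨u, hu0, rfl, hu⟩ := ih (by omega) hxz₁
    exact ⟨Function.update u (L + 1) z, by rw [Function.update_of_ne (by omega), hu0],
      Function.update_self .., forall_lt_succ_update
        (fun a b => tdist G.adj a b = (1, q - 1)) hu hz₁z⟩

theorem pow_arc_eq (h : pnum G.adj (2, q - 2) (1, q - 1) (1, q - 1) ≠ 0) {L : ℕ}
    (hL : 1 ≤ L) (hLq : L ≤ q - 1) : G.pow (1, q - 1) L = {(L, q - L)} := by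
  induction L, hL using Nat.le_induction with
  | base => rfl
  | succ L hL ih =>
    obtain ⟨n, rfl⟩ : ∃ n, L = n + 1 := ⟨L - 1, by omega⟩
    change G.prodS (G.pow (1, q - 1) (n + 1)) {(1, q - 1)} = _
    rw [ih (by omega)]
    ext k
    simp only [prodS, Set.mem_singleton_iff, exists_eq_left, Set.mem_ofPred_eq]
    constructor
    · intro hk
      obtain ⟨x, y, z, rfl, hxz, hzy⟩ := G.exists_of_pnum_ne_zero hk
      obtain ⟨u, rfl, rfl, hu⟩ := exists_arc_path_of_tdist h (by omega) (by omega) hxz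
      have := tdist_eq_of_arc_path h (by omega) hLq (forall_lt_succ_update
        (fun a b => tdist G.adj a b = (1, q - 1)) hu hzy)
      rwa [Function.update_of_ne (by omega), Function.update_self] at this
    · rintro rfl
      exact pnum_succ_ne_zero h (by omega) hLq

end CTWDR

/-- Lemma 2.4: if `p^{(2,q-2)}_{(1,q-1),(1,q-1)} = m > 0`, then
`Γ_{1,q-1}^l = {Γ_{l,q-l}}` for `1 ≤ l ≤ q-1`; in particular any path of length `l`
of arcs of type `(1,q-1)` joins vertices at two-way distance `(l, q-l)`. -/
theorem stmt3 {V : Type*} [Fintype V] (G : CTWDR V) (q m : ℕ)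
    (hm : pnum G.adj (2, q - 2) (1, q - 1) (1, q - 1) = m) (hm0 : 0 < m) :
    ∀ l, 1 ≤ l → l ≤ q - 1 →
      G.pow (1, q - 1) l = {(l, q - l)} ∧
      ∀ f : ℕ → V, (∀ i < l, tdist G.adj (f i) (f (i + 1)) = (1, q - 1)) →
        tdist G.adj (f 0) (f l) = (l, q - l) := by
  have h : pnum G.adj (2, q - 2) (1, q - 1) (1, q - 1) ≠ 0 := hm ▸ hm0.ne'
  exact fun l hl hlq =>
    ⟨CTWDR.pow_arc_eq h hl hlq, fun f hf => CTWDR.tdist_eq_of_arc_path h hl hlq hf⟩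
end
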